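/- Suppose φ: (0,∞) → (0,∞) is continuous, ψ(s) = ∫_0^s dτ/φ(τ) is finite for all s > 0, and lim_{s→∞} ψ(s) = ∞. Let f be a positive continuous function on S^{n-1} and suppose the family of support functions h(·,t) of convex bodies Ω_t satisfies ∫_{S^{n-1}} f(x) ψ(h(x,t)) dx ≤ C₀ for all t. Then there is a constant C > 0 (depending on C₀, min f, and n) such that max_{S^{n-1}} h(·,t) ≤ C for all t. -/

import Mathlib

open MeasureTheory Metric Set Filter
open scoped RealInnerProductSpace ENNReal Topology

noncomputable section

/-- Support function of a set `Ω`. -/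
def suppFn {n : ℕ} (Ω : Set (EuclideanSpace ℝ (Fin n)))
    (x : EuclideanSpace ℝ (Fin n)) : ℝ :=
  sSup ((fun y => ⟪x, y⟫) '' Ω)

/-- Radial function of `Ω` with respect to the point `z`. -/
def radFn {n : ℕ} (Ω : Set (EuclideanSpace ℝ (Fin n)))
    (z u : EuclideanSpace ℝ (Fin n)) : ℝ :=
  sSup {c : ℝ | 0 < c ∧ z + c • u ∈ Ω}

/-- The unit sphere `S^{n-1}` in `ℝ^n`. -/
def uSphere (n : ℕ) : Set (EuclideanSpace ℝ (Fin n)) := Metric.sphere 0 1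

/-- Spherical Lebesgue measure on `ℝ^n`, i.e. `(n-1)`-dimensional Hausdorff measure. -/
def sphMeas (n : ℕ) : Measure (EuclideanSpace ℝ (Fin n)) := μH[(n:ℝ) - 1]

/-- `ω_n`, the volume of the unit ball in `ℝ^n`. -/
def ballVol (n : ℕ) : ℝ := (volume (Metric.ball (0 : EuclideanSpace ℝ (Fin n)) 1)).toReal

lemma coord_dist_le {k : ℕ} (x y : EuclideanSpace ℝ (Fin k)) (i : Fin k) :
    dist (x i) (y i) ≤ dist x y := by
  rw [EuclideanSpace.dist_eq]
  calc dist (x i) (y i) = Real.sqrt (dist (x i) (y i) ^ 2) :=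
        (Real.sqrt_sq dist_nonneg).symm
    _ ≤ _ := Real.sqrt_le_sqrt (Finset.single_le_sum
        (f := fun j => dist (x j) (y j) ^ 2) (fun j _ => sq_nonneg _) (Finset.mem_univ i))

section psi
variable (φ : ℝ → ℝ)

lemma psi_nonneg (hφp : ∀ s ∈ Ioi (0:ℝ), 0 < φ s) (s : ℝ) : 0 ≤ ∫ τ in Ioc (0:ℝ) s, 1 / φ τ :=
  setIntegral_nonneg measurableSet_Ioc fun τ hτ =>
    le_of_lt (by have := hφp τ hτ.1; positivity)

lemma psi_mono (hφp : ∀ s ∈ Ioi (0:ℝ), 0 < φ s)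
    (hφint : ∀ s ∈ Ioi (0:ℝ), IntegrableOn (fun τ => 1 / φ τ) (Ioc 0 s) volume) : Monotone (fun s => ∫ τ in Ioc (0:ℝ) s, 1 / φ τ) := by
  intro a b hab
  rcases le_or_gt b 0 with hb | hb
  · simp only [Ioc_eq_empty (not_lt.2 hb), Ioc_eq_empty (not_lt.2 (hab.trans hb)),
      Measure.restrict_empty, integral_zero_measure, le_refl]
  · refine setIntegral_mono_set (hφint b hb) ?_ (HasSubset.Subset.eventuallyLE ?_)
    · filter_upwards [ae_restrict_mem measurableSet_Ioc] with τ hτ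
      have := hφp τ hτ.1; positivity
    · exact Ioc_subset_Ioc le_rfl hab
end psi

section supp
variable {k : ℕ} {Ω : Set (EuclideanSpace ℝ (Fin k))}

lemma suppFn_bdd (hc : IsCompact Ω) (x : EuclideanSpace ℝ (Fin k)) :
    BddAbove ((fun y => ⟪x, y⟫) '' Ω) :=
  (hc.image (continuous_const.inner continuous_id)).bddAbove

lemma le_suppFn (hc : IsCompact Ω) {y : EuclideanSpace ℝ (Fin k)} (hy : y ∈ Ω)
    (x : EuclideanSpace ℝ (Fin k)) : ⟪x, y⟫ ≤ suppFn Ω x :=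
  le_csSup (suppFn_bdd hc x) ⟨y, hy, rfl⟩

lemma suppFn_le (hne : Ω.Nonempty) {x : EuclideanSpace ℝ (Fin k)} {c : ℝ}
    (h : ∀ y ∈ Ω, ⟪x, y⟫ ≤ c) : suppFn Ω x ≤ c :=
  csSup_le (hne.image _) (by rintro r ⟨y, hy, rfl⟩; exact h y hy)

lemma suppFn_attained (hc : IsCompact Ω) (hne : Ω.Nonempty)
    (x : EuclideanSpace ℝ (Fin k)) : ∃ y ∈ Ω, ⟪x, y⟫ = suppFn Ω x := by
  have h : sSup ((fun y => ⟪x, y⟫) '' Ω) ∈ (fun y => ⟪x, y⟫) '' Ω :=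
    (hc.image (continuous_const.inner continuous_id)).sSup_mem (hne.image _)
  obtain ⟨y, hy, hxy⟩ := h
  exact ⟨y, hy, hxy⟩

lemma suppFn_continuous (hc : IsCompact Ω) (hne : Ω.Nonempty) {R : ℝ}
    (hR : ∀ y ∈ Ω, ‖y‖ ≤ R) : Continuous (suppFn Ω) := by
  have hR0 : 0 ≤ R := le_trans (norm_nonneg _) (hR _ hne.choose_spec)
  have key : ∀ x x' : EuclideanSpace ℝ (Fin k),
      suppFn Ω x - suppFn Ω x' ≤ R * dist x x' := by
    intro x x'
    rw [sub_le_iff_le_add]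
    refine suppFn_le hne fun y hy => ?_
    have h1 : ⟪x, y⟫ - ⟪x', y⟫ = ⟪x - x', y⟫ := (inner_sub_left _ _ _).symm
    have h2 : ⟪x - x', y⟫ ≤ ‖x - x'‖ * ‖y‖ := real_inner_le_norm _ _
    have h3 : ‖x - x'‖ * ‖y‖ ≤ dist x x' * R := by
      rw [dist_eq_norm]
      exact mul_le_mul_of_nonneg_left (hR y hy) (norm_nonneg _)
    have h4 := le_suppFn hc hy x'
    nlinarith [h4]
  refine (LipschitzWith.of_dist_le_mul (K := Real.toNNReal R)
    (f := suppFn Ω) fun x x' => ?_).continuous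
  rw [Real.dist_eq, abs_sub_le_iff, Real.coe_toNNReal _ hR0]
  exact ⟨key x x', by simpa [dist_comm] using key x' x⟩
end supp

lemma cap_meas_pos (m : ℕ) :
    0 < μH[(m:ℝ)] {x : EuclideanSpace ℝ (Fin (m+1)) |
      x ∈ sphere (0 : EuclideanSpace ℝ (Fin (m+1))) 1 ∧
      1/2 ≤ ⟪x, EuclideanSpace.single (0 : Fin (m+1)) (1:ℝ)⟫} := by
  set cap := {x : EuclideanSpace ℝ (Fin (m+1)) |
      x ∈ sphere (0 : EuclideanSpace ℝ (Fin (m+1))) 1 ∧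
      1/2 ≤ ⟪x, EuclideanSpace.single (0 : Fin (m+1)) (1:ℝ)⟫} with hcap
  set δ : ℝ := 1/(2*(m+1)) with hδdef
  have hδ : 0 < δ := by positivity
  set P : EuclideanSpace ℝ (Fin (m+1)) → (Fin m → ℝ) := fun x i => x i.succ with hPdef
  have hP : LipschitzWith 1 P := by
    refine LipschitzWith.of_dist_le_mul fun x y => ?_
    rw [NNReal.coe_one, one_mul, dist_pi_le_iff dist_nonneg]
    exact fun i => coord_dist_le x y i.succ
  set cube : Set (Fin m → ℝ) := univ.pi fun _ => Icc (-δ) δ with hcube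
  have hsub : cube ⊆ P '' cap := by
    intro w hw
    have hw' : ∀ i, |w i| ≤ δ := fun i => abs_le.2 ⟨(hw i (mem_univ i)).1, (hw i (mem_univ i)).2⟩
    set S : ℝ := ∑ i, w i ^ 2 with hS
    have hS0 : 0 ≤ S := Finset.sum_nonneg fun i _ => sq_nonneg _
    have hSle : S ≤ 1/4 := by
      have h1 : S ≤ (m : ℝ) * δ^2 := by
        calc S ≤ ∑ _i : Fin m, δ^2 := Finset.sum_le_sum fun i _ => by
                have h := hw' i
                have := abs_nonneg (w i)
                nlinarith [sq_abs (w i)]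
          _ = (m : ℝ) * δ^2 := by simp [mul_comm]
      have h2 : (m : ℝ) * δ^2 ≤ 1/4 := by
        rw [hδdef, div_pow, one_pow, mul_pow, mul_one_div,
          div_le_div_iff₀ (by positivity) (by norm_num)]
        nlinarith [sq_nonneg ((m:ℝ)), Nat.cast_nonneg (α := ℝ) m]
      linarith
    set a : ℝ := Real.sqrt (1 - S) with ha
    have ha2 : a^2 = 1 - S := Real.sq_sqrt (by linarith)
    have hahalf : 1/2 ≤ a := by
      have : Real.sqrt (1/4) ≤ a := Real.sqrt_le_sqrt (by linarith)
      calc (1:ℝ)/2 = Real.sqrt (1/4) := by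
            rw [show (1:ℝ)/4 = (1/2)^2 by norm_num, Real.sqrt_sq (by norm_num)]
        _ ≤ a := this
    refine ⟨WithLp.toLp 2 (Fin.cons a w : Fin (m+1) → ℝ), ⟨?_, ?_⟩, ?_⟩
    · rw [mem_sphere_zero_iff_norm, EuclideanSpace.norm_eq]
      have : ∑ i : Fin (m+1), ‖(Fin.cons a w : Fin (m+1) → ℝ) i‖^2 = a^2 + S := by
        rw [Fin.sum_univ_succ]
        simp only [Fin.cons_zero, Fin.cons_succ, Real.norm_eq_abs, sq_abs]
        rfl
      simp only [WithLp.ofLp_toLp]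
      rw [this, ha2]
      simp
    · rw [EuclideanSpace.inner_single_right]
      simp only [conj_trivial, one_mul]
      show 1/2 ≤ (Fin.cons a w : Fin (m+1) → ℝ) 0
      simpa using hahalf
    · funext i
      show (Fin.cons a w : Fin (m+1) → ℝ) i.succ = w i
      simp
  have h1 : μH[(m:ℝ)] cube ≤ μH[(m:ℝ)] (P '' cap) := measure_mono hsub
  have h2 : μH[(m:ℝ)] (P '' cap) ≤ (1:ℝ≥0∞)^(m:ℝ) * μH[(m:ℝ)] cap := by
    simpa using hP.hausdorffMeasure_image_le (Nat.cast_nonneg m) cap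
  have hcubepos : 0 < μH[(m:ℝ)] cube := by
    have hr : (μH[(m:ℝ)] : Measure (Fin m → ℝ)) = volume := by
      have := hausdorffMeasure_pi_real (ι := Fin m)
      simpa using this
    rw [hr, hcube, volume_pi_pi]
    rw [CanonicallyOrderedAdd.prod_pos]
    intro i _
    rw [Real.volume_Icc]
    rw [ENNReal.ofReal_pos]
    linarith
  calc (0:ℝ≥0∞) < μH[(m:ℝ)] cube := hcubepos
    _ ≤ (1:ℝ≥0∞)^(m:ℝ) * μH[(m:ℝ)] cap := h1.trans h2
    _ = μH[(m:ℝ)] cap := by rw [ENNReal.one_rpow, one_mul]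

/-- Euclidean closed balls have finite `μH[m]` measure in `ℝ^m`. -/
lemma euclid_ball_fin (m : ℕ) :
    μH[(m:ℝ)] (closedBall (0 : EuclideanSpace ℝ (Fin m)) 1) < ⊤ := by
  set j : (Fin m → ℝ) → EuclideanSpace ℝ (Fin m) := fun w => WithLp.toLp 2 w with hj
  have hjl : LipschitzWith (Real.toNNReal (Real.sqrt m)) j := by
    refine LipschitzWith.of_dist_le_mul fun x y => ?_
    rw [Real.coe_toNNReal _ (Real.sqrt_nonneg _)]
    have hd0 : (0:ℝ) ≤ dist (x : Fin m → ℝ) y := dist_nonneg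
    calc dist (j x) (j y)
        = Real.sqrt (∑ i, dist (x i) (y i) ^ 2) := EuclideanSpace.dist_eq _ _
      _ ≤ Real.sqrt ((m:ℝ) * dist (x : Fin m → ℝ) y ^ 2) := by
          refine Real.sqrt_le_sqrt ?_
          have := Finset.sum_le_card_nsmul Finset.univ (fun i => dist (x i) (y i) ^ 2)
            (dist (x : Fin m → ℝ) y ^ 2)
            (fun i _ => pow_le_pow_left₀ dist_nonneg (dist_le_pi_dist x y i) 2)
          simpa [nsmul_eq_mul] using this
      _ = Real.sqrt m * dist (x : Fin m → ℝ) y := by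
          rw [Real.sqrt_mul (Nat.cast_nonneg m), Real.sqrt_sq hd0]
  set cube : Set (Fin m → ℝ) := univ.pi fun _ => Icc (-1 : ℝ) 1 with hcube
  have hsub : closedBall (0 : EuclideanSpace ℝ (Fin m)) 1 ⊆ j '' cube := by
    intro x hx
    refine ⟨x, fun i _ => ?_, rfl⟩
    rw [mem_closedBall_zero_iff] at hx
    have h1 : dist (x i) ((0 : EuclideanSpace ℝ (Fin m)) i) ≤ dist x 0 := coord_dist_le x 0 i
    have h2 : ((0 : EuclideanSpace ℝ (Fin m)) i) = 0 := rfl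
    rw [h2, Real.dist_eq, sub_zero] at h1
    rw [dist_zero_right] at h1
    constructor <;> [skip; skip] <;> cases' abs_le.1 (h1.trans hx) with hl hr
    · exact hl
    · exact hr
  have hμcube : μH[(m:ℝ)] cube < ⊤ := by
    have hr : (μH[(m:ℝ)] : Measure (Fin m → ℝ)) = volume := by
      simpa using hausdorffMeasure_pi_real (ι := Fin m)
    rw [hr, hcube, volume_pi_pi]
    refine ENNReal.prod_lt_top fun i _ => ?_
    rw [Real.volume_Icc]
    exact ENNReal.ofReal_lt_top
  calc μH[(m:ℝ)] (closedBall (0 : EuclideanSpace ℝ (Fin m)) 1)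
      ≤ μH[(m:ℝ)] (j '' cube) := measure_mono hsub
    _ ≤ (Real.toNNReal (Real.sqrt m) : ℝ≥0∞) ^ (m:ℝ) * μH[(m:ℝ)] cube :=
        hjl.hausdorffMeasure_image_le (Nat.cast_nonneg m) cube
    _ < ⊤ := ENNReal.mul_lt_top (by
        refine (ENNReal.rpow_lt_top_of_nonneg (Nat.cast_nonneg m) ?_)
        exact ENNReal.coe_ne_top) hμcube

lemma cap_piece_fin (m : ℕ) (i : Fin (m+1)) (ε : ℝ) (hε : ε = 1 ∨ ε = -1) :
    μH[(m:ℝ)] {x : EuclideanSpace ℝ (Fin (m+1)) |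
      x ∈ sphere (0 : EuclideanSpace ℝ (Fin (m+1))) 1 ∧
      Real.sqrt (((m:ℝ)+1)⁻¹) ≤ ε * x i} < ⊤ := by
  set n' : ℝ := (m:ℝ) + 1 with hn'
  have hn'pos : (0:ℝ) < n' := by positivity
  set c : ℝ := Real.sqrt (n'⁻¹) with hc
  have hcpos : 0 < c := Real.sqrt_pos.2 (by positivity)
  have hc2 : c^2 = n'⁻¹ := Real.sq_sqrt (by positivity)
  have hcsqrt : c * Real.sqrt n' = 1 := by
    rw [hc, Real.sqrt_inv, inv_mul_cancel₀ (Real.sqrt_ne_zero'.2 hn'pos)]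
  have hε2 : ε^2 = 1 := by rcases hε with rfl | rfl <;> norm_num
  have hεabs : |ε| = 1 := by rcases hε with rfl | rfl <;> norm_num
  set D : Set (EuclideanSpace ℝ (Fin m)) := {w | ‖w‖^2 ≤ 1 - n'⁻¹} with hD
  set g : EuclideanSpace ℝ (Fin m) → ℝ := fun w => Real.sqrt (1 - ‖w‖^2) with hg
  set G : EuclideanSpace ℝ (Fin m) → EuclideanSpace ℝ (Fin (m+1)) :=
    fun w => WithLp.toLp 2 (i.insertNth (ε * g w) w : Fin (m+1) → ℝ) with hG
  have hDnorm : ∀ w ∈ D, ‖w‖ ≤ 1 := by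
    intro w hw
    have h1 : ‖w‖^2 ≤ 1 - n'⁻¹ := hw
    nlinarith [norm_nonneg w, inv_nonneg.2 hn'pos.le]
  have hgD : ∀ w ∈ D, c ≤ g w := by
    intro w hw
    have h1 : ‖w‖^2 ≤ 1 - n'⁻¹ := hw
    rw [hg, hc]
    exact Real.sqrt_le_sqrt (by linarith)
  have hgsq : ∀ w ∈ D, g w ^ 2 = 1 - ‖w‖^2 := by
    intro w hw
    have h1 : ‖w‖^2 ≤ 1 - n'⁻¹ := hw
    exact Real.sq_sqrt (by nlinarith [inv_nonneg.2 hn'pos.le])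
  -- Lipschitz bound for g on D
  have hglip : ∀ w ∈ D, ∀ v ∈ D, |g w - g v| ≤ Real.sqrt n' * ‖w - v‖ := by
    intro w hw v hv
    have hinner : ‖v‖^2 - ‖w‖^2 = ⟪v - w, v + w⟫ := by
      rw [inner_sub_left, inner_add_right, inner_add_right,
        real_inner_self_eq_norm_sq, real_inner_self_eq_norm_sq, real_inner_comm w v]
      ring
    have habs : |‖v‖^2 - ‖w‖^2| ≤ ‖v - w‖ * 2 := by
      rw [hinner]
      calc |⟪v - w, v + w⟫| ≤ ‖v - w‖ * ‖v + w‖ := abs_real_inner_le_norm _ _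
        _ ≤ ‖v - w‖ * 2 := by
            refine mul_le_mul_of_nonneg_left ?_ (norm_nonneg _)
            calc ‖v + w‖ ≤ ‖v‖ + ‖w‖ := norm_add_le _ _
              _ ≤ 2 := by linarith [hDnorm v hv, hDnorm w hw]
    have hdiff : (g w - g v) * (g w + g v) = ‖v‖^2 - ‖w‖^2 := by
      have h1 := hgsq w hw; have h2 := hgsq v hv
      nlinarith [h1, h2]
    have hsum : 2 * c ≤ g w + g v := by linarith [hgD w hw, hgD v hv]
    have ht0 : 0 ≤ |g w - g v| := abs_nonneg _
    have heq : |g w - g v| * (g w + g v) = |‖v‖^2 - ‖w‖^2| := by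
      rw [← hdiff, abs_mul, abs_of_nonneg (by linarith [hcpos] : (0:ℝ) ≤ g w + g v)]
    have hnv : ‖v - w‖ = ‖w - v‖ := norm_sub_rev _ _
    have hkey : |g w - g v| * (2 * c) ≤ ‖w - v‖ * 2 := by
      calc |g w - g v| * (2 * c) ≤ |g w - g v| * (g w + g v) :=
            mul_le_mul_of_nonneg_left hsum ht0
        _ = |‖v‖^2 - ‖w‖^2| := heq
        _ ≤ ‖v - w‖ * 2 := habs
        _ = ‖w - v‖ * 2 := by rw [hnv]
    nlinarith [Real.sqrt_nonneg n', mul_le_mul_of_nonneg_right hkey (Real.sqrt_nonneg n'),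
      norm_nonneg (w - v), hcpos]
  -- Lipschitz bound for G on D
  have hGlip : LipschitzOnWith (Real.toNNReal (Real.sqrt ((m:ℝ)+2))) G D := by
    refine LipschitzOnWith.of_dist_le_mul fun w hw v hv => ?_
    rw [Real.coe_toNNReal _ (Real.sqrt_nonneg _)]
    have hd0 : (0:ℝ) ≤ dist w v := dist_nonneg
    have hdnorm : dist w v = ‖w - v‖ := dist_eq_norm _ _
    have hsum : ∑ j : Fin (m+1), dist (G w j) (G v j) ^ 2
        = dist (ε * g w) (ε * g v) ^ 2 + ∑ j : Fin m, dist (w j) (v j) ^ 2 := by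
      rw [Fin.sum_univ_succAbove (fun j => dist (G w j) (G v j) ^ 2) i]
      congr 1
      · rw [hG]; simp [Fin.insertNth_apply_same]
      · refine Finset.sum_congr rfl fun j _ => ?_
        rw [hG]; simp [Fin.insertNth_apply_succAbove]
    have hwsum : ∑ j : Fin m, dist (w j) (v j) ^ 2 = dist w v ^ 2 := by
      rw [EuclideanSpace.dist_eq w v, Real.sq_sqrt (Finset.sum_nonneg fun j _ => sq_nonneg _)]
    have hgdist : dist (ε * g w) (ε * g v) ≤ Real.sqrt n' * dist w v := by
      rw [Real.dist_eq, ← mul_sub, abs_mul, hεabs, one_mul, hdnorm]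
      exact hglip w hw v hv
    calc dist (G w) (G v) = Real.sqrt (∑ j : Fin (m+1), dist (G w j) (G v j) ^ 2) :=
          EuclideanSpace.dist_eq _ _
      _ ≤ Real.sqrt (((m:ℝ)+2) * dist w v ^ 2) := by
          refine Real.sqrt_le_sqrt ?_
          rw [hsum, hwsum]
          have h1 : dist (ε * g w) (ε * g v) ^ 2 ≤ n' * dist w v ^ 2 := by
            have := pow_le_pow_left₀ dist_nonneg hgdist 2
            rw [mul_pow, Real.sq_sqrt hn'pos.le] at this
            exact this
          rw [hn'] at h1
          nlinarith [sq_nonneg (dist w v)]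
      _ = Real.sqrt ((m:ℝ)+2) * dist w v := by
          rw [Real.sqrt_mul (by positivity), Real.sqrt_sq hd0]
  -- the cap piece is contained in `G '' D`
  have hsub : {x : EuclideanSpace ℝ (Fin (m+1)) |
      x ∈ sphere (0 : EuclideanSpace ℝ (Fin (m+1))) 1 ∧ c ≤ ε * x i} ⊆ G '' D := by
    rintro x ⟨hxs, hxi⟩
    have hsum1 : ∑ j : Fin (m+1), x j ^ 2 = 1 := by
      rw [mem_sphere_zero_iff_norm] at hxs
      rw [EuclideanSpace.norm_eq] at hxs
      have := Real.sqrt_eq_one.1 (by simpa [Real.norm_eq_abs, sq_abs] using hxs)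
      simpa [Real.norm_eq_abs, sq_abs] using
        (Real.sqrt_eq_one.1 (by simpa [Real.norm_eq_abs, sq_abs] using hxs))
    set w : EuclideanSpace ℝ (Fin m) := WithLp.toLp 2 (i.removeNth x : Fin m → ℝ) with hw
    have hw2 : ‖w‖^2 = 1 - x i ^ 2 := by
      rw [EuclideanSpace.norm_eq, Real.sq_sqrt (Finset.sum_nonneg fun j _ => sq_nonneg _)]
      have : ∑ j : Fin m, ‖w j‖ ^ 2 = ∑ j : Fin m, x (i.succAbove j) ^ 2 := by
        refine Finset.sum_congr rfl fun j _ => ?_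
        rw [Real.norm_eq_abs, sq_abs]
        rfl
      rw [this]
      have := Fin.sum_univ_succAbove (fun j => x j ^ 2) i
      rw [hsum1] at this
      linarith
    have hxi2 : n'⁻¹ ≤ x i ^ 2 := by
      have h1 : c^2 ≤ (ε * x i)^2 := pow_le_pow_left₀ hcpos.le hxi 2
      rw [mul_pow, hε2, one_mul] at h1
      rw [← hc2]; exact h1
    have hwD : w ∈ D := by rw [hD, mem_setOf_eq, hw2]; linarith
    have hgw : g w = |x i| := by
      rw [hg]
      show Real.sqrt (1 - ‖w‖^2) = |x i|
      rw [hw2]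
      rw [show (1:ℝ) - (1 - x i ^2) = x i ^2 by ring, Real.sqrt_sq_eq_abs]
    have hεg : ε * g w = x i := by
      rw [hgw]
      rcases hε with rfl | rfl
      · rw [one_mul] at hxi ⊢
        exact abs_of_nonneg (le_trans hcpos.le hxi)
      · have hneg : x i < 0 := by nlinarith [hxi, hcpos]
        rw [abs_of_neg hneg]; ring
    refine ⟨w, hwD, ?_⟩
    rw [hG]
    show WithLp.toLp 2 (i.insertNth (ε * g w) (i.removeNth x) : Fin (m+1) → ℝ) = x
    rw [hεg]
    exact congrArg (WithLp.toLp 2) (Fin.insertNth_self_removeNth i x)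
  -- conclude
  have hDsub : D ⊆ closedBall (0 : EuclideanSpace ℝ (Fin m)) 1 := by
    intro w hw
    rw [mem_closedBall_zero_iff]
    exact hDnorm w hw
  calc μH[(m:ℝ)] {x : EuclideanSpace ℝ (Fin (m+1)) |
        x ∈ sphere (0 : EuclideanSpace ℝ (Fin (m+1))) 1 ∧ c ≤ ε * x i}
      ≤ μH[(m:ℝ)] (G '' D) := measure_mono hsub
    _ ≤ (Real.toNNReal (Real.sqrt ((m:ℝ)+2)) : ℝ≥0∞) ^ (m:ℝ) * μH[(m:ℝ)] D :=
        hGlip.hausdorffMeasure_image_le (Nat.cast_nonneg m)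
    _ < ⊤ := ENNReal.mul_lt_top
        (ENNReal.rpow_lt_top_of_nonneg (Nat.cast_nonneg m) ENNReal.coe_ne_top)
        (lt_of_le_of_lt (measure_mono hDsub) (euclid_ball_fin m))

lemma sphere_meas_fin (m : ℕ) :
    μH[(m:ℝ)] (sphere (0 : EuclideanSpace ℝ (Fin (m+1))) 1) < ⊤ := by
  set c : ℝ := Real.sqrt (((m:ℝ)+1)⁻¹) with hc
  have hcov : sphere (0 : EuclideanSpace ℝ (Fin (m+1))) 1 ⊆
      ⋃ i : Fin (m+1),
        ({x : EuclideanSpace ℝ (Fin (m+1)) | x ∈ sphere (0 : EuclideanSpace ℝ (Fin (m+1))) 1 ∧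
            c ≤ (1:ℝ) * x i} ∪
         {x : EuclideanSpace ℝ (Fin (m+1)) | x ∈ sphere (0 : EuclideanSpace ℝ (Fin (m+1))) 1 ∧
            c ≤ (-1:ℝ) * x i}) := by
    intro x hxs
    have hsum1 : ∑ j : Fin (m+1), x j ^ 2 = 1 := by
      rw [mem_sphere_zero_iff_norm] at hxs
      rw [EuclideanSpace.norm_eq] at hxs
      simpa [Real.norm_eq_abs, sq_abs] using
        (Real.sqrt_eq_one.1 (by simpa [Real.norm_eq_abs, sq_abs] using hxs))
    have hex : ∃ i, ((m:ℝ)+1)⁻¹ ≤ x i ^ 2 := by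
      by_contra hcon
      push_neg at hcon
      have : ∑ j : Fin (m+1), x j ^ 2 < ∑ _j : Fin (m+1), ((m:ℝ)+1)⁻¹ :=
        Finset.sum_lt_sum_of_nonempty ⟨0, Finset.mem_univ 0⟩ fun j _ => hcon j
      rw [hsum1, Finset.sum_const, Finset.card_univ, Fintype.card_fin, nsmul_eq_mul] at this
      push_cast at this
      rw [mul_inv_cancel₀ (by positivity : ((m:ℝ)+1) ≠ 0)] at this
      linarith
    obtain ⟨i, hi⟩ := hex
    have habs : c ≤ |x i| := by
      rw [hc, ← Real.sqrt_sq_eq_abs]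
      exact Real.sqrt_le_sqrt hi
    refine mem_iUnion.2 ⟨i, ?_⟩
    rcases le_or_gt 0 (x i) with hpos | hneg
    · exact Or.inl ⟨hxs, by rwa [one_mul, ← abs_of_nonneg hpos]⟩
    · exact Or.inr ⟨hxs, by rw [neg_one_mul, ← abs_of_neg hneg]; exact habs⟩
  calc μH[(m:ℝ)] (sphere (0 : EuclideanSpace ℝ (Fin (m+1))) 1)
      ≤ ∑ i : Fin (m+1), μH[(m:ℝ)]
        ({x : EuclideanSpace ℝ (Fin (m+1)) | x ∈ sphere (0 : EuclideanSpace ℝ (Fin (m+1))) 1 ∧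
            c ≤ (1:ℝ) * x i} ∪
         {x : EuclideanSpace ℝ (Fin (m+1)) | x ∈ sphere (0 : EuclideanSpace ℝ (Fin (m+1))) 1 ∧
            c ≤ (-1:ℝ) * x i}) := (measure_mono hcov).trans (measure_iUnion_fintype_le _ _)
    _ < ⊤ := by
        refine ENNReal.sum_lt_top.2 fun i _ => ?_
        refine lt_of_le_of_lt (measure_union_le _ _) (ENNReal.add_lt_top.2 ⟨?_, ?_⟩)
        · exact cap_piece_fin m i 1 (Or.inl rfl)
        · exact cap_piece_fin m i (-1) (Or.inr rfl)

lemma cap_meas_eq (m : ℕ) (u : EuclideanSpace ℝ (Fin (m+1))) (hu : ‖u‖ = 1) :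
    μH[(m:ℝ)] {x : EuclideanSpace ℝ (Fin (m+1)) |
      x ∈ sphere (0 : EuclideanSpace ℝ (Fin (m+1))) 1 ∧ 1/2 ≤ ⟪x, u⟫}
    = μH[(m:ℝ)] {x : EuclideanSpace ℝ (Fin (m+1)) |
      x ∈ sphere (0 : EuclideanSpace ℝ (Fin (m+1))) 1 ∧
      1/2 ≤ ⟪x, EuclideanSpace.single (0 : Fin (m+1)) (1:ℝ)⟫} := by
  set e₀ : EuclideanSpace ℝ (Fin (m+1)) := EuclideanSpace.single (0 : Fin (m+1)) (1:ℝ) with he₀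
  have he₀n : ‖e₀‖ = 1 := by rw [he₀, EuclideanSpace.norm_single]; norm_num
  set g := Submodule.reflection (Submodule.span ℝ {e₀ - u})ᗮ with hgdef
  have hge₀ : g e₀ = u := Submodule.reflection_sub (by rw [he₀n, hu])
  have hinv : ∀ z, g (g z) = z := fun z => Submodule.reflection_reflection _ z
  have hnorm : ∀ z, ‖g z‖ = ‖z‖ := fun z => g.norm_map z
  have hinner : ∀ a b, ⟪g a, g b⟫ = ⟪a, b⟫ := fun a b => g.inner_map_map a b
  have himg : {x : EuclideanSpace ℝ (Fin (m+1)) |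
      x ∈ sphere (0 : EuclideanSpace ℝ (Fin (m+1))) 1 ∧ 1/2 ≤ ⟪x, u⟫}
      = g '' {x : EuclideanSpace ℝ (Fin (m+1)) |
      x ∈ sphere (0 : EuclideanSpace ℝ (Fin (m+1))) 1 ∧ 1/2 ≤ ⟪x, e₀⟫} := by
    ext z
    constructor
    · rintro ⟨hzs, hzu⟩
      refine ⟨g z, ⟨?_, ?_⟩, hinv z⟩
      · rw [mem_sphere_zero_iff_norm] at hzs ⊢
        rw [hnorm, hzs]
      · have : ⟪g (g z), g e₀⟫ = ⟪g z, e₀⟫ := hinner _ _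
        rw [hinv, hge₀] at this
        rw [← this]; exact hzu
    · rintro ⟨x, ⟨hxs, hxe⟩, rfl⟩
      refine ⟨?_, ?_⟩
      · rw [mem_sphere_zero_iff_norm] at hxs ⊢
        rw [hnorm, hxs]
      · rw [← hge₀, hinner]; exact hxe
  rw [himg]
  exact Isometry.hausdorffMeasure_image g.isometry (Or.inl (Nat.cast_nonneg m)) _

/-- if `ψ(s) = ∫_0^s dτ/φ(τ)` is finite for all `s > 0` and tends to `∞`,
`f > 0` is continuous on the sphere and the functionals `∫ f ψ(h(·,t))` are uniformly
bounded, then the support functions `h(·,t)` are uniformly bounded above. -/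
theorem stmt10 {n : ℕ} (hn : 1 ≤ n)
    (φ : ℝ → ℝ) (hφc : ContinuousOn φ (Ioi 0)) (hφp : ∀ s ∈ Ioi (0:ℝ), 0 < φ s)
    (hφint : ∀ s ∈ Ioi (0:ℝ), IntegrableOn (fun τ => 1 / φ τ) (Ioc 0 s) volume)
    (hψ : Tendsto (fun s => ∫ τ in Ioc (0:ℝ) s, 1 / φ τ) atTop atTop)
    (f : EuclideanSpace ℝ (Fin n) → ℝ)
    (hfc : ContinuousOn f (uSphere n)) (hfp : ∀ x ∈ uSphere n, 0 < f x)
    (Ω : ℝ → Set (EuclideanSpace ℝ (Fin n)))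
    (hconv : ∀ t, Convex ℝ (Ω t)) (hcomp : ∀ t, IsCompact (Ω t))
    (h0 : ∀ t, (0 : EuclideanSpace ℝ (Fin n)) ∈ interior (Ω t))
    (C₀ : ℝ)
    (hΦ : ∀ t : ℝ, (∫ x in uSphere n,
      f x * (∫ τ in Ioc (0:ℝ) (suppFn (Ω t) x), 1 / φ τ) ∂sphMeas n) ≤ C₀) :
    ∃ C > 0, ∀ t : ℝ, ∀ x ∈ uSphere n, suppFn (Ω t) x ≤ C := by
  obtain ⟨m, rfl⟩ : ∃ m, n = m + 1 := ⟨n - 1, (Nat.succ_pred_eq_of_pos hn).symm⟩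
  set ψ : ℝ → ℝ := fun s => ∫ τ in Ioc (0:ℝ) s, 1 / φ τ with hψdef
  have hψmono : Monotone ψ := psi_mono φ hφp hφint
  have hψnn : ∀ s, 0 ≤ ψ s := fun s => psi_nonneg φ hφp s
  have hψmeas : Measurable ψ := hψmono.measurable
  set e₀ : EuclideanSpace ℝ (Fin (m+1)) := EuclideanSpace.single (0 : Fin (m+1)) (1:ℝ) with he₀
  have he₀n : ‖e₀‖ = 1 := by rw [he₀, EuclideanSpace.norm_single]; norm_num
  have he₀s : e₀ ∈ uSphere (m+1) := by
    show e₀ ∈ sphere (0 : EuclideanSpace ℝ (Fin (m+1))) 1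
    rw [mem_sphere_zero_iff_norm]; exact he₀n
  have hsm : sphMeas (m+1) = μH[(m:ℝ)] := by
    unfold sphMeas
    have : ((m+1:ℕ):ℝ) - 1 = (m:ℝ) := by push_cast; ring
    rw [this]
  have hUS : uSphere (m+1) = sphere (0 : EuclideanSpace ℝ (Fin (m+1))) 1 := rfl
  have msphere : MeasurableSet (uSphere (m+1)) := by
    rw [hUS]; exact isClosed_sphere.measurableSet
  have Sfin : sphMeas (m+1) (uSphere (m+1)) < ⊤ := by
    rw [hsm, hUS]; exact sphere_meas_fin m
  set cap : EuclideanSpace ℝ (Fin (m+1)) → Set (EuclideanSpace ℝ (Fin (m+1))) :=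
    fun u => {x | x ∈ sphere (0 : EuclideanSpace ℝ (Fin (m+1))) 1 ∧ 1/2 ≤ ⟪x, u⟫} with hcapdef
  set κ : ℝ≥0∞ := sphMeas (m+1) (cap e₀) with hκ
  have hcapsub : ∀ u, cap u ⊆ uSphere (m+1) := fun u x hx => hx.1
  have hκpos : 0 < κ := by
    rw [hκ, hsm]
    exact cap_meas_pos m
  have hκfin : κ < ⊤ := by
    rw [hκ]
    exact lt_of_le_of_lt (measure_mono (hcapsub e₀)) Sfin
  have hκt : 0 < κ.toReal := ENNReal.toReal_pos hκpos.ne' hκfin.ne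
  obtain ⟨z, hz, hminz⟩ := (isCompact_sphere (0 : EuclideanSpace ℝ (Fin (m+1))) 1).exists_isMinOn
    ⟨e₀, he₀s⟩ hfc
  set m₀ : ℝ := f z with hm₀
  have hm₀pos : 0 < m₀ := hfp z hz
  set B : ℝ := (C₀ + 1) / (m₀ * κ.toReal) with hB
  obtain ⟨M, hM⟩ : ∃ M, ∀ s ≥ M, B ≤ ψ s := eventually_atTop.1 (hψ.eventually_ge_atTop B)
  refine ⟨max (2*M) 1, lt_of_lt_of_le one_pos (le_max_right _ _), fun t x₀ hx₀ => ?_⟩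
  by_contra hgt
  push_neg at hgt
  have hne : (Ω t).Nonempty := ⟨0, interior_subset (h0 t)⟩
  have hcomp' := hcomp t
  obtain ⟨R, hR⟩ : ∃ R, ∀ y ∈ Ω t, ‖y‖ ≤ R := by
    obtain ⟨r, hr⟩ := (hcomp t).isBounded.subset_closedBall 0
    exact ⟨r, fun y hy => mem_closedBall_zero_iff.1 (hr hy)⟩
  have hcont : Continuous (suppFn (Ω t)) := suppFn_continuous hcomp' hne hR
  have hsupbd : ∀ x ∈ uSphere (m+1), suppFn (Ω t) x ≤ max R 0 := by
    intro x hx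
    refine suppFn_le hne fun y hy => ?_
    have h1 : ⟪x, y⟫ ≤ ‖x‖ * ‖y‖ := real_inner_le_norm _ _
    have hx1 : ‖x‖ = 1 := mem_sphere_zero_iff_norm.1 hx
    rw [hx1, one_mul] at h1
    exact h1.trans ((hR y hy).trans (le_max_left R 0))
  obtain ⟨y, hy, hyx⟩ := suppFn_attained hcomp' hne x₀
  have hx₀n : ‖x₀‖ = 1 := mem_sphere_zero_iff_norm.1 hx₀
  have hybig : max (2*M) 1 < ‖y‖ := by
    have h1 : suppFn (Ω t) x₀ ≤ ‖y‖ := by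
      rw [← hyx]
      have h2 := real_inner_le_norm x₀ y
      rwa [hx₀n, one_mul] at h2
    linarith
  have hy0 : y ≠ 0 := by
    intro h
    rw [h, norm_zero] at hybig
    have := le_max_right (2*M) 1
    linarith
  set u : EuclideanSpace ℝ (Fin (m+1)) := (‖y‖:ℝ)⁻¹ • y with hu
  have hun : ‖u‖ = 1 := by
    rw [hu, norm_smul, norm_inv, norm_norm, inv_mul_cancel₀ (norm_ne_zero_iff.2 hy0)]
  have hyu : ‖y‖ • u = y := by
    rw [hu, smul_smul, mul_inv_cancel₀ (norm_ne_zero_iff.2 hy0), one_smul]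
  have hkey : ∀ x ∈ cap u, M ≤ suppFn (Ω t) x := by
    intro x hx
    obtain ⟨hxs, hxu⟩ := hx
    have h1 : ⟪x, y⟫ ≤ suppFn (Ω t) x := le_suppFn hcomp' hy x
    have h2 : ⟪x, ‖y‖ • u⟫ = ‖y‖ * ⟪x, u⟫ := real_inner_smul_right _ _ _
    rw [hyu] at h2
    have h3 : ‖y‖ * (1/2) ≤ ‖y‖ * ⟪x, u⟫ := mul_le_mul_of_nonneg_left hxu (norm_nonneg y)
    have h4 : 2*M ≤ max (2*M) 1 := le_max_left _ _
    nlinarith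
  haveI : IsFiniteMeasure ((sphMeas (m+1)).restrict (uSphere (m+1))) :=
    ⟨by rwa [Measure.restrict_apply_univ]⟩
  obtain ⟨zM, hzM, hmaxz⟩ :=
    (isCompact_sphere (0 : EuclideanSpace ℝ (Fin (m+1))) 1).exists_isMaxOn ⟨e₀, he₀s⟩ hfc
  set F : EuclideanSpace ℝ (Fin (m+1)) → ℝ := fun x => f x * ψ (suppFn (Ω t) x) with hF
  have hFmeas : AEStronglyMeasurable F ((sphMeas (m+1)).restrict (uSphere (m+1))) := by
    have h1 : AEStronglyMeasurable f ((sphMeas (m+1)).restrict (uSphere (m+1))) :=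
      hfc.aestronglyMeasurable msphere
    have h2 : AEStronglyMeasurable (fun x => ψ (suppFn (Ω t) x))
        ((sphMeas (m+1)).restrict (uSphere (m+1))) :=
      (hψmeas.comp hcont.measurable).aestronglyMeasurable
    exact h1.mul h2
  have hFint : IntegrableOn F (uSphere (m+1)) (sphMeas (m+1)) := by
    refine Integrable.mono' (integrable_const (f zM * ψ (max R 0))) hFmeas ?_
    refine (ae_restrict_iff' msphere).2 (ae_of_all _ fun x hx => ?_)
    have h1 : 0 ≤ F x := mul_nonneg (hfp x hx).le (hψnn _)
    rw [Real.norm_eq_abs, abs_of_nonneg h1]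
    exact mul_le_mul (isMaxOn_iff.1 hmaxz x hx) (hψmono (hsupbd x hx)) (hψnn _) (hfp zM hzM).le
  have hcapmeas : MeasurableSet (cap u) := by
    refine IsClosed.measurableSet ?_
    have h1 : cap u = sphere (0 : EuclideanSpace ℝ (Fin (m+1))) 1 ∩ {x | 1/2 ≤ ⟪x, u⟫} := rfl
    rw [h1]
    exact isClosed_sphere.inter (isClosed_le continuous_const (continuous_id.inner continuous_const))
  have hcapκ : sphMeas (m+1) (cap u) = κ := by
    rw [hκ, hsm]
    exact cap_meas_eq m u hun
  have hcapfin : sphMeas (m+1) (cap u) < ⊤ := by rw [hcapκ]; exact hκfin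
  have hptwise : ∀ x ∈ cap u, (m₀ * B) ≤ F x := by
    intro x hx
    have hψB : B ≤ ψ (suppFn (Ω t) x) := hM _ (hkey x hx)
    have hfm : m₀ ≤ f x := isMinOn_iff.1 hminz x (hcapsub u hx)
    have h1 := mul_le_mul_of_nonneg_left hψB hm₀pos.le
    have h2 := mul_le_mul_of_nonneg_right hfm (hψnn (suppFn (Ω t) x))
    show m₀ * B ≤ f x * ψ (suppFn (Ω t) x)
    linarith
  have h1 : (m₀ * B) * κ.toReal ≤ ∫ x in cap u, F x ∂sphMeas (m+1) := by
    have hmono := setIntegral_mono_on (integrableOn_const hcapfin.ne)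
      (hFint.mono_set (hcapsub u)) hcapmeas hptwise
    rw [setIntegral_const, measureReal_def, hcapκ, smul_eq_mul] at hmono
    rw [mul_comm]
    exact hmono
  have h2 : ∫ x in cap u, F x ∂sphMeas (m+1) ≤ ∫ x in uSphere (m+1), F x ∂sphMeas (m+1) := by
    refine setIntegral_mono_set hFint ?_ (HasSubset.Subset.eventuallyLE (hcapsub u))
    exact (ae_restrict_iff' msphere).2 (ae_of_all _ fun x hx => mul_nonneg (hfp x hx).le (hψnn _))
  have h3 : ∫ x in uSphere (m+1), F x ∂sphMeas (m+1) ≤ C₀ := hΦ t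
  have hBval : (m₀ * B) * κ.toReal = C₀ + 1 := by
    rw [hB]
    field_simp
  linarith
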